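/- Let C = (G, M, I) be a formal context with intent set INT and extent set EXT. For a subset M_rem ⊆ M, let C* = (G, M \ M_rem, I*) with I* = I \ {(g,m) : g ∈ G, m ∈ M_rem}, with intent set INT* and extent set EXT*. Then INT* = {B \ M_rem : B ∈ INT} and EXT* ⊆ EXT. -/
import Mathlib


variable {G M : Type*}

/-- Attribute derivation of a set of objects, relative to attribute carrier `atts`. -/
def attUp (atts : Set M) (I : Set (G × M)) (A : Set G) : Set M :=
  {m ∈ atts | ∀ g ∈ A, (g, m) ∈ I}

/-- Object derivation of a set of attributes. -/
def objDown (I : Set (G × M)) (Bs : Set M) : Set G :=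
  {g | ∀ m ∈ Bs, (g, m) ∈ I}

/-- `(A, Bs)` is a formal concept of the context with attribute set `atts` and incidence `I`. -/
def IsConcept (atts : Set M) (I : Set (G × M)) (A : Set G) (Bs : Set M) : Prop :=
  attUp atts I A = Bs ∧ objDown I Bs = A

/-- The set of intents. -/
def intents (atts : Set M) (I : Set (G × M)) : Set (Set M) :=
  {Bs | ∃ A, IsConcept atts I A Bs}

/-- The set of extents. -/
def extents (atts : Set M) (I : Set (G × M)) : Set (Set G) :=
  {A | ∃ Bs, IsConcept atts I A Bs}

lemma sub_objDown_attUp (atts : Set M) (I : Set (G × M)) (A : Set G) :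
    A ⊆ objDown I (attUp atts I A) := by
  intro g hg m hm
  exact hm.2 g hg

lemma sub_attUp_objDown (atts : Set M) (I : Set (G × M)) {Bs : Set M} (h : Bs ⊆ atts) :
    Bs ⊆ attUp atts I (objDown I Bs) := by
  intro m hm
  exact ⟨h hm, fun g hg => hg m hm⟩

lemma attUp_anti (atts : Set M) (I : Set (G × M)) {A A' : Set G} (h : A ⊆ A') :
    attUp atts I A' ⊆ attUp atts I A :=
  fun m hm => ⟨hm.1, fun g hg => hm.2 g (h hg)⟩

lemma objDown_anti (I : Set (G × M)) {B B' : Set M} (h : B ⊆ B') :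
    objDown I B' ⊆ objDown I B :=
  fun g hg m hm => hg m (h hm)

lemma attUp_closed (atts : Set M) (I : Set (G × M)) (A : Set G) :
    attUp atts I (objDown I (attUp atts I A)) = attUp atts I A := by
  apply Set.Subset.antisymm
  · exact attUp_anti atts I (sub_objDown_attUp atts I A)
  · exact sub_attUp_objDown atts I (fun m hm => hm.1)

lemma objDown_closed (atts : Set M) (I : Set (G × M)) {Bs : Set M} (h : Bs ⊆ atts) :
    objDown I (attUp atts I (objDown I Bs)) = objDown I Bs := by
  apply Set.Subset.antisymm
  · exact objDown_anti I (sub_attUp_objDown atts I h)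
  · exact sub_objDown_attUp atts I (objDown I Bs)

lemma attUp_restrict (Ms Mrem : Set M) (I : Set (G × M)) (A : Set G) :
    attUp (Ms \ Mrem) {p ∈ I | p.2 ∉ Mrem} A = attUp Ms I A \ Mrem := by
  ext m
  constructor
  · rintro ⟨⟨h1, h2⟩, h3⟩
    exact ⟨⟨h1, fun g hg => (h3 g hg).1⟩, h2⟩
  · rintro ⟨⟨h1, h3⟩, h2⟩
    exact ⟨⟨h1, h2⟩, fun g hg => ⟨h3 g hg, h2⟩⟩

lemma objDown_restrict (Mrem : Set M) (I : Set (G × M)) {Bs : Set M}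
    (h : ∀ m ∈ Bs, m ∉ Mrem) :
    objDown {p ∈ I | p.2 ∉ Mrem} Bs = objDown I Bs := by
  ext g
  constructor
  · exact fun hg m hm => (hg m hm).1
  · exact fun hg m hm => ⟨hg m hm, h m hm⟩

theorem stmt4 (Ms : Set M) (I : Set (G × M)) (Mrem : Set M) (hrem : Mrem ⊆ Ms)
    (hI : ∀ p ∈ I, p.2 ∈ Ms) :
    intents (Ms \ Mrem) {p ∈ I | p.2 ∉ Mrem} = (fun Bs => Bs \ Mrem) '' intents Ms I ∧
    extents (Ms \ Mrem) {p ∈ I | p.2 ∉ Mrem} ⊆ extents Ms I := by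
  set I' : Set (G × M) := {p ∈ I | p.2 ∉ Mrem} with hI'
  constructor
  · ext Bs
    constructor
    · rintro ⟨A, hB, hA⟩
      refine ⟨attUp Ms I A, ⟨objDown I (attUp Ms I A),
        attUp_closed Ms I A, rfl⟩, ?_⟩
      simp only
      rw [← attUp_restrict Ms Mrem I A, hB]
    · rintro ⟨B, ⟨A, hB, hA⟩, rfl⟩
      -- B \ Mrem = attUp (Ms\Mrem) I' A
      have key : attUp (Ms \ Mrem) I' A = B \ Mrem := by
        rw [attUp_restrict Ms Mrem I A, hB]
      refine ⟨objDown I' (B \ Mrem), ?_, rfl⟩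
      show attUp (Ms \ Mrem) I' (objDown I' (B \ Mrem)) = B \ Mrem
      rw [← key, attUp_closed]
  · rintro A ⟨Bs, hB, hA⟩
    have hsub : Bs ⊆ Ms \ Mrem := by rw [← hB]; exact fun m hm => hm.1
    have hno : ∀ m ∈ Bs, m ∉ Mrem := fun m hm => (hsub hm).2
    have hA' : objDown I Bs = A := by rw [← objDown_restrict Mrem I hno]; exact hA
    refine ⟨attUp Ms I A, rfl, ?_⟩
    rw [← hA', objDown_closed Ms I (fun m hm => (hsub hm).1)]
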